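/- Let Q=(V,E,s,t) be a finite quiver without cycles of length m, with starting set S and associated quiver Q'. Let a ∈ S and x ∈ Path(Q') with t(a) = s(x). Then there exists an automorphism f ∈ Aut(Q') such that f(x) = ax (where ax denotes the concatenated path, which lies in Path(Q')). -/

import Mathlib

open scoped Classical

noncomputable section

variable {V E : Type*}

/-- A (positive-length) path in the quiver `(V, E, s, t)`: a nonempty list of arrows
in which consecutive arrows are composable, i.e. `t αᵢ = s αᵢ₊₁`. -/
def IsPath (s t : E → V) (l : List E) : Prop :=
  l ≠ [] ∧ l.Chain' (fun a b => t a = s b)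

/-- The source of a (nonempty) list of arrows, as an `Option`. -/
def src? (s : E → V) (l : List E) : Option V := l.head?.map s

/-- The target of a (nonempty) list of arrows, as an `Option`. -/
def tgt? (t : E → V) (l : List E) : Option V := l.getLast?.map t

/-- The quiver has no cycles: there is no path whose source equals its target. -/
def NoCycles (s t : E → V) : Prop :=
  ∀ l : List E, IsPath s t l → src? s l ≠ tgt? t l

/-- `m` is the maximum of the lengths of paths of the quiver (the length of the quiver). -/
def IsMaxPathLen (s t : E → V) (m : ℕ) : Prop :=
  (∃ l : List E, IsPath s t l ∧ l.length = m) ∧ ∀ l : List E, IsPath s t l → l.length ≤ m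

/-- The set `Path(Q)` of all paths of length `≥ 1`, as a subtype of lists of arrows. -/
abbrev PathQ (s t : E → V) := {l : List E // IsPath s t l}

/-- The underlying vector space of the Lie algebra `n_Q` obtained from the quiver:
the real vector space with basis `Path(Q)`. -/
abbrev nQ (s t : E → V) := PathQ s t →₀ ℝ

/-- The Lie bracket of two basis paths: `[x, y] = xy` if the concatenation `xy` is a path,
`[x, y] = -yx` if the concatenation `yx` is a path, and `[x, y] = 0` otherwise. -/
def braBasis (s t : E → V) (x y : PathQ s t) : nQ s t :=
  if h : IsPath s t (x.val ++ y.val) then Finsupp.single ⟨x.val ++ y.val, h⟩ 1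
  else if h' : IsPath s t (y.val ++ x.val) then -Finsupp.single ⟨y.val ++ x.val, h'⟩ 1
  else 0

/-- The Lie bracket of `n_Q`, extended bilinearly from basis paths. -/
def bra (s t : E → V) (u v : nQ s t) : nQ s t :=
  u.sum fun x cx => v.sum fun y cy => (cx * cy) • braBasis s t x y

/-- The span of all brackets of elements of two subspaces of `n_Q`. -/
def braSpan (s t : E → V) (M N : Submodule ℝ (nQ s t)) : Submodule ℝ (nQ s t) :=
  Submodule.span ℝ {z | ∃ u ∈ M, ∃ v ∈ N, z = bra s t u v}

/-- The starting set `S` of a quiver of length `m`: the set of arrows `a` such that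
`a x` is a path of length `m` for some path `x`. -/
def startSet (s t : E → V) (m : ℕ) : Set E :=
  {a | ∃ x : List E, IsPath s t x ∧ IsPath s t (a :: x) ∧ (a :: x).length = m}

/-- The arrow set `E' = (E ∖ S) ∪ {ab ∈ Path(Q) : a ∈ S, b ∈ E}` of the quiver `Q'`,
realized as a set of lists of arrows of `Q`. -/
def edgesQ' (s t : E → V) (m : ℕ) : Set (List E) :=
  {l | (∃ a : E, a ∉ startSet s t m ∧ l = [a]) ∨
       (∃ a b : E, a ∈ startSet s t m ∧ IsPath s t [a, b] ∧ l = [a, b])}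

/-- `L` is a decomposition of the list `l` of arrows as a path of the quiver `Q'`:
a nonempty chain of consecutively composable `Q'`-arrows whose concatenation is `l`. -/
def IsDecompQ' (s t : E → V) (m : ℕ) (L : List (List E)) (l : List E) : Prop :=
  L ≠ [] ∧ (∀ p ∈ L, p ∈ edgesQ' s t m) ∧
    L.Chain' (fun p q => tgt? t p = src? s q) ∧ L.flatten = l

/-- `l` underlies a path of the quiver `Q'`. -/
def IsPathQ' (s t : E → V) (m : ℕ) (l : List E) : Prop :=
  ∃ L : List (List E), IsDecompQ' s t m L l

/-- `f : E → E` is an automorphism of the quiver `(V, E, s, t)`. -/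
def IsQuivAut (s t : E → V) (f : E → E) : Prop :=
  Function.Bijective f ∧ ∀ x y : E, (t x = s y ↔ t (f x) = s (f y))

/-- `g` is an automorphism of the quiver whose arrow set is the set `ES` of lists of
arrows of `Q` (such as the quiver `Q'` with arrow set `edgesQ'`). -/
def IsQuivAutOn (s t : E → V) (ES : Set (List E)) (g : List E → List E) : Prop :=
  Set.BijOn g ES ES ∧
    ∀ p ∈ ES, ∀ q ∈ ES, (tgt? t p = src? s q ↔ tgt? t (g p) = src? s (g q))

/-- The subspace `n' = span Path(Q')` of `n_Q`. -/
def nQ'span (s t : E → V) (m : ℕ) : Submodule ℝ (nQ s t) :=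
  Submodule.span ℝ {u | ∃ p : PathQ s t, IsPathQ' s t m p.val ∧ u = Finsupp.single p 1}

/-- A single arrow, regarded as a path of length one. -/
def edgePath (s t : E → V) (a : E) : PathQ s t := ⟨[a], by first | simp [IsPath, List.Chain'] | exact ⟨List.cons_ne_nil _ _, List.isChain_singleton _⟩⟩

/-!
Write `x = b x'`. Since `a ∈ S` starts a path of maximal length, no arrow of `Q` ends at `s a`,
and every arrow ending at `t a = s b` lies in `S`; hence `b ∉ S`, and no arrow of `Q'` ends at
`s a` or at `t a`. So `[b]` and `[a, b]` are arrows of `Q'` with the same target whose sources are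
targets of no arrow of `Q'`, and exchanging them is an automorphism of `Q'`. Every decomposition
of `x` into arrows of `Q'` starts with `[b]`, and none of its later arrows is `[b]` or `[a, b]`,
so the exchange sends it to a decomposition of `a x`.
-/

section Swap

variable {s t : E → V} {ES : Set (List E)} {p q : List E}

theorem isQuivAutOn_swap (hp : p ∈ ES) (hq : q ∈ ES) (htgt : tgt? t p = tgt? t q)
    (hsrc : ∀ r ∈ ES, tgt? t r ≠ src? s p ∧ tgt? t r ≠ src? s q) :
    IsQuivAutOn s t ES (Equiv.swap p q) := by
  have tgt_swap (r : List E) : tgt? t (Equiv.swap p q r) = tgt? t r := by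
    rcases eq_or_ne r p with rfl | hrp
    · simp [htgt]
    rcases eq_or_ne r q with rfl | hrq
    · simp [htgt]
    · rw [Equiv.swap_apply_of_ne_of_ne hrp hrq]
  refine ⟨Equiv.swap_bijOn_self (iff_of_true hp hq), fun r hr u hu => ?_⟩
  rw [tgt_swap]
  rcases eq_or_ne u p with rfl | hup
  · simp [(hsrc r hr).1, (hsrc r hr).2]
  rcases eq_or_ne u q with rfl | huq
  · simp [(hsrc r hr).1, (hsrc r hr).2]
  · rw [Equiv.swap_apply_of_ne_of_ne hup huq]

theorem map_swap_tail_eq_self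
    (hsrc : ∀ r ∈ ES, tgt? t r ≠ src? s p ∧ tgt? t r ≠ src? s q) :
    ∀ (r : List E) (L : List (List E)), (∀ u ∈ r :: L, u ∈ ES) →
      (r :: L).IsChain (fun u v => tgt? t u = src? s v) → L.map (Equiv.swap p q) = L
  | _, [], _, _ => rfl
  | r, u :: L, hES, hch => by
    obtain ⟨hru, hch⟩ := List.isChain_cons_cons.mp hch
    have hr := hsrc r (hES r List.mem_cons_self)
    have hup : u ≠ p := by rintro rfl; exact hr.1 hru
    have huq : u ≠ q := by rintro rfl; exact hr.2 hru
    rw [List.map_cons, Equiv.swap_apply_of_ne_of_ne hup huq,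
      map_swap_tail_eq_self hsrc u L (fun v hv => hES v (List.mem_cons_of_mem r hv)) hch]

end Swap

section StartSet

variable {s t : E → V} {m : ℕ} {a b e : E}

theorem IsMaxPathLen.target_ne_source (hm : IsMaxPathLen s t m) (he : e ∈ startSet s t m)
    (c : E) : t c ≠ s e := by
  obtain ⟨z, -, hez, hlen⟩ := he
  intro hc
  have hpath : IsPath s t (c :: e :: z) :=
    ⟨List.cons_ne_nil _ _, List.isChain_cons_cons.mpr ⟨hc, hez.2⟩⟩
  have := hm.2 _ hpath
  simp only [List.length_cons] at this hlen
  omega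

theorem mem_startSet_of_target_eq (ha : a ∈ startSet s t m) (he : t e = t a) :
    e ∈ startSet s t m := by
  obtain ⟨z, hz, haz, hlen⟩ := ha
  refine ⟨z, hz, ⟨List.cons_ne_nil _ _, ?_⟩, by simpa using hlen⟩
  obtain ⟨hhead, hch⟩ := List.isChain_cons.mp haz.2
  exact List.isChain_cons.mpr ⟨fun y hy => he.trans (hhead y hy), hch⟩

theorem isPath_pair : IsPath s t [a, b] ↔ t a = s b :=
  (and_iff_right (List.cons_ne_nil _ _)).trans (List.isChain_pair (R := fun x y => t x = s y))

theorem singleton_mem_edgesQ' (hb : b ∉ startSet s t m) : [b] ∈ edgesQ' s t m :=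
  Or.inl ⟨b, hb, rfl⟩

theorem pair_mem_edgesQ' (ha : a ∈ startSet s t m) (hab : t a = s b) :
    [a, b] ∈ edgesQ' s t m :=
  Or.inr ⟨a, b, ha, isPath_pair.mpr hab, rfl⟩

theorem exists_tgt?_eq_of_mem_edgesQ' (hm : IsMaxPathLen s t m) {p : List E}
    (hp : p ∈ edgesQ' s t m) : ∃ d ∉ startSet s t m, tgt? t p = some (t d) := by
  rcases hp with ⟨c, hc, rfl⟩ | ⟨c, d, hc, hcd, rfl⟩
  · exact ⟨c, hc, rfl⟩
  · exact ⟨d, fun hd => hm.target_ne_source hd c (isPath_pair.mp hcd), rfl⟩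

theorem tgt?_ne_of_mem_edgesQ' (hm : IsMaxPathLen s t m) (ha : a ∈ startSet s t m)
    {p : List E} (hp : p ∈ edgesQ' s t m) :
    tgt? t p ≠ some (t a) ∧ tgt? t p ≠ some (s a) := by
  obtain ⟨d, hd, hpd⟩ := exists_tgt?_eq_of_mem_edgesQ' hm hp
  rw [hpd, Ne, Ne, Option.some_inj, Option.some_inj]
  exact ⟨fun h => hd (mem_startSet_of_target_eq ha h), hm.target_ne_source ha d⟩

theorem eq_singleton_of_mem_edgesQ' (hb : b ∉ startSet s t m) {p : List E}
    (hp : p ∈ edgesQ' s t m) (hhead : p.head? = some b) : p = [b] := by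
  rcases hp with ⟨c, -, rfl⟩ | ⟨c, d, hc, -, rfl⟩
  · simp_all
  · simp only [List.head?_cons, Option.some_inj] at hhead
    exact absurd (hhead ▸ hc) hb

theorem IsDecompQ'.eq_singleton_cons (hb : b ∉ startSet s t m) {L : List (List E)}
    {x : List E} (hL : IsDecompQ' s t m L (b :: x)) : ∃ L', L = [b] :: L' ∧ L'.flatten = x := by
  obtain ⟨hne, hmem, -, hflat⟩ := hL
  obtain ⟨p, L', rfl⟩ := List.exists_cons_of_ne_nil hne
  have hpne : p ≠ [] := by
    rcases hmem p List.mem_cons_self with ⟨c, -, rfl⟩ | ⟨c, d, -, -, rfl⟩ <;> simp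
  have hhead : p.head? = some b := by
    obtain ⟨c, p', rfl⟩ := List.exists_cons_of_ne_nil hpne
    simp only [List.flatten_cons, List.cons_append, List.cons.injEq] at hflat
    simp [hflat.1]
  obtain rfl := eq_singleton_of_mem_edgesQ' hb (hmem p List.mem_cons_self) hhead
  simp only [List.flatten_cons, List.singleton_append, List.cons.injEq] at hflat
  exact ⟨L', rfl, hflat.2⟩

theorem IsDecompQ'.map {g : List E → List E} (hg : IsQuivAutOn s t (edgesQ' s t m) g)
    {L : List (List E)} {l : List E} (hL : IsDecompQ' s t m L l) :
    IsDecompQ' s t m (L.map g) (L.map g).flatten := by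
  obtain ⟨hne, hmem, hch, -⟩ := hL
  refine ⟨by simpa using hne, ?_, ?_, rfl⟩
  · simp only [List.mem_map]
    rintro _ ⟨p, hp, rfl⟩
    exact hg.1.mapsTo (hmem p hp)
  · refine List.isChain_map_of_isChain g
      (R := fun p q => p ∈ edgesQ' s t m ∧ q ∈ edgesQ' s t m ∧ tgt? t p = src? s q)
      (fun p q ⟨hp, hq, hpq⟩ => (hg.2 p hp q hq).mp hpq) ?_
    exact hch.imp_of_mem_imp fun p q hp hq hpq => ⟨hmem p hp, hmem q hq, hpq⟩

end StartSet

theorem exists_autQ'_sending_x_to_ax_general (s t : E → V)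
    (m : ℕ) (hm : IsMaxPathLen s t m)
    (a : E) (ha : a ∈ startSet s t m)
    (x : List E) (hx : IsPathQ' s t m x) (hax : src? s x = some (t a)) :
    IsPathQ' s t m (a :: x) ∧
    ∃ g : List E → List E, IsQuivAutOn s t (edgesQ' s t m) g ∧
      ∀ L : List (List E), IsDecompQ' s t m L x → (L.map g).flatten = a :: x := by
  obtain ⟨b, x', rfl⟩ : ∃ b x', x = b :: x' := by
    cases x with
    | nil => simp [src?] at hax
    | cons b x' => exact ⟨b, x', rfl⟩
  have hab : t a = s b := by simpa [src?, eq_comm] using hax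
  have hb : b ∉ startSet s t m := fun hb => hm.target_ne_source hb a hab
  have hsrc (r : List E) (hr : r ∈ edgesQ' s t m) :
      tgt? t r ≠ src? s [b] ∧ tgt? t r ≠ src? s [a, b] := by
    simpa [src?, ← hab] using tgt?_ne_of_mem_edgesQ' hm ha hr
  have hg : IsQuivAutOn s t (edgesQ' s t m) (Equiv.swap [b] [a, b]) :=
    isQuivAutOn_swap (singleton_mem_edgesQ' hb) (pair_mem_edgesQ' ha hab) (by simp [tgt?]) hsrc
  have hgL (L : List (List E)) (hL : IsDecompQ' s t m L (b :: x')) :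
      (L.map (Equiv.swap [b] [a, b])).flatten = a :: b :: x' := by
    obtain ⟨L', rfl, hflat⟩ := hL.eq_singleton_cons hb
    rw [List.map_cons, Equiv.swap_apply_left,
      map_swap_tail_eq_self hsrc [b] L' hL.2.1 hL.2.2.1]
    simp [hflat]
  obtain ⟨L, hL⟩ := hx
  exact ⟨⟨_, hgL L hL ▸ hL.map hg⟩, Equiv.swap [b] [a, b], hg, hgL⟩

/-- Let `Q` be a finite quiver without cycles of length `m`, `a ∈ S`
and `x ∈ Path(Q')` with `t(a) = s(x)`. Then `ax ∈ Path(Q')` and there is an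
automorphism `g` of `Q'` sending the path `x` to the path `ax` (the action of `g` on a
path of `Q'` maps any decomposition of it into `Q'`-arrows piecewise). -/
theorem exists_autQ'_sending_x_to_ax [Finite V] [Finite E] (s t : E → V)
    (hQ : NoCycles s t) (m : ℕ) (hm : IsMaxPathLen s t m)
    (a : E) (ha : a ∈ startSet s t m)
    (x : List E) (hx : IsPathQ' s t m x) (hax : src? s x = some (t a)) :
    IsPathQ' s t m (a :: x) ∧
    ∃ g : List E → List E, IsQuivAutOn s t (edgesQ' s t m) g ∧
      ∀ L : List (List E), IsDecompQ' s t m L x → (L.map g).flatten = a :: x :=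
  exists_autQ'_sending_x_to_ax_general s t m hm a ha x hx hax

end
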